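/- arXiv:hep-th/0202038 — 3 statements merged into one kernel-verified Lean document; each statement's English description precedes it below -/
import Mathlib

section
/- Let E be a measurable additive commutative group with measurable translations, μ a σ-finite measure on E, and v, w ∈ E. Suppose b_v, b_w, b_{v+w} : E → [0,∞] are measurable functions such that the pushforward of μ under u ↦ u − v equals μ.withDensity b_v, the pushforward under u ↦ u − w equals μ.withDensity b_w, and the pushforward under u ↦ u − (v+w) equals μ.withDensity b_{v+w}. Then b_{v+w}(u) = b_v(u) · b_w(u+v) for μ-almost every u ∈ E. -/
open MeasureTheory
open scoped ENNReal

lemma map_withDensity_comp {E : Type*} [MeasurableSpace E] (μ : Measure E)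
    (f : E → E) (hf : Measurable f) (g : E → ℝ≥0∞) (hg : Measurable g) :
    Measure.map f (μ.withDensity (fun x => g (f x))) = (Measure.map f μ).withDensity g := by
  ext s hs
  rw [Measure.map_apply hf hs, withDensity_apply _ (hf hs), withDensity_apply _ hs,
    setLIntegral_map hs hg hf]

/-- The cocycle relation for the densities of a translationally quasi-invariant σ-finite
measure: if the pushforwards of `μ` by `u ↦ u − v`, `u ↦ u − w`, `u ↦ u − (v+w)` have
densities `b_v`, `b_w`, `b_{v+w}` with respect to `μ`, then
`b_{v+w}(u) = b_v(u)·b_w(u+v)` for μ-almost every `u`. -/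
theorem density_cocycle {E : Type*} [MeasurableSpace E] [AddCommGroup E]
    [MeasurableAdd E] [MeasurableNeg E] (μ : Measure E) [SigmaFinite μ] (v w : E)
    (bv bw bvw : E → ℝ≥0∞) (hbv : Measurable bv) (hbw : Measurable bw)
    (hbvw : Measurable bvw)
    (hv : Measure.map (fun u => u - v) μ = μ.withDensity bv)
    (hw : Measure.map (fun u => u - w) μ = μ.withDensity bw)
    (hvw : Measure.map (fun u => u - (v + w)) μ = μ.withDensity bvw) :
    ∀ᵐ u ∂μ, bvw u = bv u * bw (u + v) := by
  have hmv : Measurable (fun u : E => u - v) := measurable_sub_const v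
  have hmw : Measurable (fun u : E => u - w) := measurable_sub_const w
  have hbw' : Measurable (fun u : E => bw (u + v)) := hbw.comp (measurable_add_const v)
  have key : μ.withDensity bvw = μ.withDensity (fun u => bv u * bw (u + v)) := by
    have hcomp : (fun u : E => u - (v + w)) = (fun u : E => u - v) ∘ (fun u : E => u - w) := by
      funext u
      simp [Function.comp, sub_sub, add_comm]
    calc μ.withDensity bvw = Measure.map (fun u => u - (v + w)) μ := hvw.symm
      _ = Measure.map (fun u : E => u - v) (Measure.map (fun u : E => u - w) μ) := by
          rw [hcomp, Measure.map_map hmv hmw]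
      _ = Measure.map (fun u : E => u - v) (μ.withDensity bw) := by rw [hw]
      _ = (Measure.map (fun u : E => u - v) μ).withDensity (fun u => bw (u + v)) := by
          have h := map_withDensity_comp μ (fun u : E => u - v) hmv
            (fun u => bw (u + v)) hbw'
          simpa [sub_add_cancel] using h
      _ = (μ.withDensity bv).withDensity (fun u => bw (u + v)) := by rw [hv]
      _ = μ.withDensity (fun u => bv u * bw (u + v)) := by
          rw [← withDensity_mul μ hbv hbw']
          rfl
  have h1 := Measure.rnDeriv_withDensity μ hbvw
  have h2 := Measure.rnDeriv_withDensity μ (f := fun u => bv u * bw (u + v)) (hbv.mul hbw')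
  rw [key] at h1
  filter_upwards [h1, h2] with u hu1 hu2
  rw [← hu1, hu2]
end

section
/- Let f : ℝ → ℂ be continuous with f(x) = 0 for all x < 0, and let c > 0 be such that x ↦ exp(−c·x)·f(x) is integrable on ℝ. Define the Laplace transform f^L(z) = ∫_{0}^{∞} exp(−z·x)·f(x) dx for Re z > 0, and assume t ↦ f^L(c + i·t) is integrable on ℝ. Then for every x ∈ ℝ: f(x) = (1/(2π))·exp(c·x)·∫_{ℝ} exp(i·t·x)·f^L(c + i·t) dt. -/
/-! On the vertical line `Re z = c` the Laplace transform of `f` is the Fourier transform of the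
damped function `e^{-cx} f(x)`, evaluated at the frequency `t / 2π`. That function is integrable,
continuous, and has integrable Fourier transform, so Fourier inversion recovers it pointwise;
multiplying back by `e^{cx}` gives `f`. -/

open MeasureTheory

/-- The Laplace transform `f^L(z) = ∫_{0}^{∞} exp(−z·x)·f(x) dx`. -/
noncomputable def laplaceTransform (f : ℝ → ℂ) (z : ℂ) : ℂ :=
  ∫ x in Set.Ioi (0 : ℝ), Complex.exp (-(z * x)) * f x

open FourierTransform Real Filter

theorem laplaceTransform_eq_fourier_damped {f : ℝ → ℂ} (hsupp : ∀ x < (0 : ℝ), f x = 0)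
    (c t : ℝ) :
    laplaceTransform f (c + t * Complex.I) =
      𝓕 (fun y : ℝ => Complex.exp (-(c * y : ℝ)) * f y) (t / (2 * π)) := by
  have hvanish : ∀ᵐ y : ℝ, y ∉ Set.Ioi 0 → Complex.exp (-((c + t * Complex.I) * y)) * f y = 0 := by
    filter_upwards [compl_mem_ae_iff.mpr (measure_singleton (0 : ℝ))] with y hy0 hy
    rw [hsupp y (lt_of_le_of_ne (not_lt.mp hy) hy0), mul_zero]
  rw [Real.fourier_real_eq_integral_exp_smul, laplaceTransform,
    setIntegral_eq_integral_of_ae_compl_eq_zero hvanish]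
  refine integral_congr_ae (Eventually.of_forall fun y => ?_)
  have hπ : π ≠ 0 := pi_ne_zero
  simp only [smul_eq_mul]
  rw [← mul_assoc, ← Complex.exp_add]
  congr 2
  push_cast
  field_simp
  ring

theorem integral_exp_mul_fourier_div_two_pi {g : ℝ → ℂ} (hg : Integrable g) {x : ℝ}
    (hgx : ContinuousAt g x) (hint : Integrable fun t : ℝ => 𝓕 g (t / (2 * π))) :
    ∫ t : ℝ, Complex.exp (t * x * Complex.I) * 𝓕 g (t / (2 * π)) = 2 * π * g x := by
  have hπ : 2 * π ≠ 0 := by positivity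
  have hfourier : Integrable (𝓕 g) := by
    simpa only [div_eq_mul_inv] using
      (integrable_comp_mul_right_iff (𝓕 g) (inv_ne_zero hπ)).mp hint
  have hscale := Measure.integral_comp_mul_left
    (fun t : ℝ => Complex.exp (t * x * Complex.I) * 𝓕 g (t / (2 * π))) (2 * π)
  have hinv : ∫ s : ℝ, Complex.exp (↑(2 * π * s) * x * Complex.I) * 𝓕 g (2 * π * s / (2 * π))
      = g x := by
    rw [← hg.fourierInv_fourier_eq hfourier hgx, Real.fourierInv_eq']
    refine integral_congr_ae (Eventually.of_forall fun s => ?_)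
    simp only [mul_div_cancel_left₀ s hπ, smul_eq_mul, Real.inner_apply]
    push_cast
    ring_nf
  rw [hinv, abs_of_pos (by positivity), eq_inv_smul_iff₀ hπ, Complex.real_smul] at hscale
  exact_mod_cast hscale.symm

theorem laplace_inversion_general (f : ℝ → ℂ) (hf : Continuous f)
    (hsupp : ∀ x < (0 : ℝ), f x = 0) (c : ℝ)
    (hint : Integrable fun x : ℝ => Complex.exp (-(c * x : ℝ)) * f x)
    (hint' : Integrable fun t : ℝ => laplaceTransform f (c + t * Complex.I)) :
    ∀ x : ℝ, f x = (1 / (2 * Real.pi) : ℂ) * Real.exp (c * x) *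
      ∫ t : ℝ, Complex.exp (t * x * Complex.I) * laplaceTransform f (c + t * Complex.I) := by
  intro x
  simp only [laplaceTransform_eq_fourier_damped hsupp c] at hint' ⊢
  rw [integral_exp_mul_fourier_div_two_pi hint (by fun_prop) hint']
  push_cast
  rw [Complex.exp_neg]
  field_simp

/-- The Laplace inversion formula: for `f` continuous, vanishing on `(−∞,0)`, with
`exp(−c·x)·f(x)` integrable and `t ↦ f^L(c+it)` integrable,
`f(x) = (1/(2π))·e^{cx}·∫ e^{itx} f^L(c+it) dt`. -/
theorem laplace_inversion (f : ℝ → ℂ) (hf : Continuous f)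
    (hsupp : ∀ x < (0 : ℝ), f x = 0) (c : ℝ) (hc : 0 < c)
    (hint : Integrable fun x : ℝ => Complex.exp (-(c * x : ℝ)) * f x)
    (hint' : Integrable fun t : ℝ => laplaceTransform f (c + t * Complex.I)) :
    ∀ x : ℝ, f x = (1 / (2 * Real.pi) : ℂ) * Real.exp (c * x) *
      ∫ t : ℝ, Complex.exp (t * x * Complex.I) * laplaceTransform f (c + t * Complex.I) :=
  laplace_inversion_general f hf hsupp c hint hint'
end

section
/- Let f : ℝ → ℂ be measurable with f(x) = 0 for all x < 0, and suppose there exist A > 0 and m ∈ ℕ with ‖f(x)‖ ≤ A·(1+|x|)^m for all x (polynomial growth). Then the Fourier–Laplace transform h(z) = ∫_{0}^{∞} f(x)·exp(i·z·x) dx is well defined and complex differentiable (holomorphic) on the open upper half-plane {z ∈ ℂ : Im z > 0}. -/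
/-!
On a half-plane `Im w ≥ b > 0` the integrand `f(x)·e^{iwx}` and its `w`-derivative
`f(x)·e^{iwx}·ix` are dominated on `(0, ∞)` by `A(1+x)^{m+1}e^{-bx}`, which is integrable since
polynomials grow slower than exponentials. Differentiation under the integral sign then shows
that the transform is holomorphic.
-/

open MeasureTheory Set Filter Topology Asymptotics Complex

theorem integrableOn_one_add_pow_mul_exp_neg_mul {b : ℝ} (hb : 0 < b) (k : ℕ) :
    IntegrableOn (fun x : ℝ => (1 + x) ^ k * Real.exp (-b * x)) (Ioi 0) := by
  refine integrable_of_isBigO_exp_neg (half_pos hb) (by fun_prop) ?_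
  have hpoly : (fun x : ℝ => (1 + x) ^ k) =o[atTop] fun x => Real.exp (b / 2 * (1 + x)) :=
    (isLittleO_pow_exp_pos_mul_atTop k (half_pos hb)).comp_tendsto
      (tendsto_atTop_add_const_left _ 1 tendsto_id)
  have hexp : (fun x => Real.exp (b / 2 * (1 + x)) * Real.exp (-b * x)) =
      fun x => Real.exp (b / 2) * Real.exp (-(b / 2) * x) := by
    ext x; rw [← Real.exp_add, ← Real.exp_add]; ring_nf
  exact (hpoly.isBigO.mul (isBigO_refl _ atTop)).trans (hexp ▸ isBigO_const_mul_self _ _ _)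

theorem norm_cexp_I_mul_mul_ofReal (w : ℂ) (x : ℝ) :
    ‖cexp (I * w * x)‖ = Real.exp (-w.im * x) := by
  simp [Complex.norm_exp, Complex.mul_re]

noncomputable def fourierLaplace (f : ℝ → ℂ) (z : ℂ) : ℂ :=
  ∫ x in Ioi (0 : ℝ), f x * cexp (I * z * x)

section PolynomialGrowth

variable {f : ℝ → ℂ} {A : ℝ} {m : ℕ}

theorem norm_mul_cexp_I_mul_le (hgrowth : ∀ x : ℝ, ‖f x‖ ≤ A * (1 + |x|) ^ m) {x : ℝ}
    (hx : 0 < x) {b : ℝ} {w : ℂ} (hbw : b ≤ w.im) :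
    ‖f x * cexp (I * w * x)‖ ≤ A * ((1 + x) ^ m * Real.exp (-b * x)) := by
  calc ‖f x * cexp (I * w * x)‖ = ‖f x‖ * Real.exp (-w.im * x) := by
        rw [norm_mul, norm_cexp_I_mul_mul_ofReal]
    _ ≤ ‖f x‖ * Real.exp (-b * x) := by gcongr
    _ ≤ A * (1 + x) ^ m * Real.exp (-b * x) := by
        gcongr
        simpa [abs_of_pos hx] using hgrowth x
    _ = A * ((1 + x) ^ m * Real.exp (-b * x)) := mul_assoc _ _ _

theorem integrableOn_mul_cexp_I_mul (hf : AEStronglyMeasurable f)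
    (hgrowth : ∀ x : ℝ, ‖f x‖ ≤ A * (1 + |x|) ^ m) {w : ℂ} (hw : 0 < w.im) :
    IntegrableOn (fun x : ℝ => f x * cexp (I * w * x)) (Ioi 0) := by
  refine ((integrableOn_one_add_pow_mul_exp_neg_mul hw m).const_mul A).mono'
    (hf.mul (by fun_prop)).restrict ?_
  filter_upwards [self_mem_ae_restrict measurableSet_Ioi] with x hx
  exact norm_mul_cexp_I_mul_le hgrowth hx le_rfl

theorem norm_mul_cexp_I_mul_mul_I_mul_le (hgrowth : ∀ x : ℝ, ‖f x‖ ≤ A * (1 + |x|) ^ m)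
    {x : ℝ} (hx : 0 < x) {b : ℝ} {w : ℂ} (hbw : b ≤ w.im) :
    ‖f x * cexp (I * w * x) * (I * x)‖ ≤ A * ((1 + x) ^ (m + 1) * Real.exp (-b * x)) := by
  calc ‖f x * cexp (I * w * x) * (I * x)‖ = ‖f x * cexp (I * w * x)‖ * x := by
        rw [norm_mul, norm_mul I, norm_I, one_mul, norm_real, Real.norm_of_nonneg hx.le]
    _ ≤ ‖f x * cexp (I * w * x)‖ * (1 + x) := by gcongr; linarith
    _ ≤ A * ((1 + x) ^ m * Real.exp (-b * x)) * (1 + x) := by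
        gcongr
        exact norm_mul_cexp_I_mul_le hgrowth hx hbw
    _ = A * ((1 + x) ^ (m + 1) * Real.exp (-b * x)) := by ring

theorem hasDerivAt_fourierLaplace (hf : AEStronglyMeasurable f)
    (hgrowth : ∀ x : ℝ, ‖f x‖ ≤ A * (1 + |x|) ^ m) {z : ℂ} (hz : 0 < z.im) :
    HasDerivAt (fourierLaplace f)
      (∫ x in Ioi (0 : ℝ), f x * cexp (I * z * x) * (I * x)) z := by
  have hs : im ⁻¹' Ioi (z.im / 2) ∈ 𝓝 z :=
    (isOpen_Ioi.preimage continuous_im).mem_nhds (half_lt_self hz)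
  refine (hasDerivAt_integral_of_dominated_loc_of_deriv_le (μ := volume.restrict (Ioi 0))
    (F := fun w x => f x * cexp (I * w * x)) (F' := fun w x => f x * cexp (I * w * x) * (I * x))
    hs
    (Eventually.of_forall fun _ => (hf.mul (by fun_prop)).restrict)
    (integrableOn_mul_cexp_I_mul hf hgrowth hz)
    (((hf.mul (by fun_prop)).mul (by fun_prop)).restrict) ?_
    ((integrableOn_one_add_pow_mul_exp_neg_mul (half_pos hz) (m + 1)).const_mul A) ?_).2
  · filter_upwards [self_mem_ae_restrict measurableSet_Ioi] with x hx w hw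
    exact norm_mul_cexp_I_mul_mul_I_mul_le hgrowth hx (le_of_lt hw)
  · refine ae_of_all _ fun x w _ => ?_
    have hlin : HasDerivAt (fun w : ℂ => I * w * x) (I * x) w := by
      simpa using ((hasDerivAt_id w).const_mul I).mul_const (x : ℂ)
    simpa [mul_assoc] using hlin.cexp.const_mul (f x)

end PolynomialGrowth

theorem fourierLaplace_holomorphic_general (f : ℝ → ℂ) (hf : Measurable f)
    (A : ℝ) (m : ℕ) (hgrowth : ∀ x : ℝ, ‖f x‖ ≤ A * (1 + |x|) ^ m) :
    ∀ z : ℂ, 0 < z.im →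
      IntegrableOn (fun x : ℝ => f x * Complex.exp (Complex.I * z * x)) (Set.Ioi 0) ∧
      DifferentiableAt ℂ
        (fun z : ℂ => ∫ x in Set.Ioi (0 : ℝ), f x * Complex.exp (Complex.I * z * x)) z :=
  fun _ hz => ⟨integrableOn_mul_cexp_I_mul hf.aestronglyMeasurable hgrowth hz,
    (hasDerivAt_fourierLaplace hf.aestronglyMeasurable hgrowth hz).differentiableAt⟩

/-- The Fourier–Laplace transform `h(z) = ∫_{0}^{∞} f(x)·exp(izx) dx` of a measurable
function `f` of polynomial growth supported in `[0,∞)` is well defined (the integrand is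
integrable) and holomorphic on the open upper half-plane. -/
theorem fourierLaplace_holomorphic (f : ℝ → ℂ) (hf : Measurable f)
    (hsupp : ∀ x < (0 : ℝ), f x = 0)
    (A : ℝ) (hA : 0 < A) (m : ℕ) (hgrowth : ∀ x : ℝ, ‖f x‖ ≤ A * (1 + |x|) ^ m) :
    ∀ z : ℂ, 0 < z.im →
      IntegrableOn (fun x : ℝ => f x * Complex.exp (Complex.I * z * x)) (Set.Ioi 0) ∧
      DifferentiableAt ℂ
        (fun z : ℂ => ∫ x in Set.Ioi (0 : ℝ), f x * Complex.exp (Complex.I * z * x)) z :=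
  fourierLaplace_holomorphic_general f hf A m hgrowth
end
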